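/- For every integer n ≥ 1 and every θ ∈ (0, π), the integral ∫₀^π cos(n·u)/(cos u − cos θ) du (taken as a principal value at u = θ) equals π·sin(n·θ)/sin θ. -/

import Mathlib

open Real MeasureTheory Set Filter Topology

/-!
The polynomial identity `cos (n u) - cos (n θ) = (cos u - cos θ) · P_n(u)` splits the integrand
into a continuous part `P_n`, whose integral over `[0, π]` is `π sin (n θ) / sin θ` by the
Chebyshev-type recurrence `P_{n+2} = 2 cos ((n+1) u) + 2 cos θ · P_{n+1} - P_n`, and the
multiple `cos (n θ) / (cos u - cos θ)`. The latter has principal value `0`: its primitive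
`(log |sin ((θ + u)/2)| - log |sin ((θ - u)/2)|) / sin θ` vanishes at `0` and `π`, and its jump
across the symmetric gap `(θ - ε, θ + ε)` tends to `0`.
-/

lemma cos_add_two_mul_add_cos_mul (x y : ℝ) :
    cos ((x + 2) * y) + cos (x * y) = 2 * cos ((x + 1) * y) * cos y := by
  rw [show (x + 2) * y = (x + 1) * y + y by ring, show x * y = (x + 1) * y - y by ring,
    cos_add, cos_sub]
  ring

lemma sin_add_two_mul_add_sin_mul (x y : ℝ) :
    sin ((x + 2) * y) + sin (x * y) = 2 * sin ((x + 1) * y) * cos y := by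
  rw [show (x + 2) * y = (x + 1) * y + y by ring, show x * y = (x + 1) * y - y by ring,
    sin_add, sin_sub]
  ring

lemma integral_cos_nat_mul_zero_pi {k : ℕ} (hk : k ≠ 0) :
    ∫ u in (0 : ℝ)..π, cos (k * u) = 0 := by
  simp [intervalIntegral.integral_comp_mul_left (fun x => cos x) (Nat.cast_ne_zero.2 hk),
    sin_nat_mul_pi]

/-- The continuous extension of `u ↦ (cos (n u) - cos (n θ)) / (cos u - cos θ)`. -/
noncomputable def glauertKernel (θ : ℝ) : ℕ → ℝ → ℝ
  | 0 => fun _ => 0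
  | 1 => fun _ => 1
  | n + 2 => fun u => 2 * cos ((n + 1 : ℕ) * u) + 2 * cos θ * glauertKernel θ (n + 1) u
      - glauertKernel θ n u

section glauertKernel

variable (θ : ℝ)

@[fun_prop]
lemma continuous_glauertKernel (n : ℕ) : Continuous (glauertKernel θ n) := by
  induction n using Nat.twoStepInduction with
  | zero => exact continuous_const
  | one => exact continuous_const
  | more n ih₀ ih₁ => simp only [glauertKernel]; fun_prop

lemma glauertKernel_mul_cos_sub_cos (n : ℕ) (u : ℝ) :
    glauertKernel θ n u * (cos u - cos θ) = cos (n * u) - cos (n * θ) := by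
  induction n using Nat.twoStepInduction with
  | zero => simp [glauertKernel]
  | one => simp [glauertKernel]
  | more n ih₀ ih₁ =>
    simp only [glauertKernel]
    push_cast at *
    linear_combination 2 * cos θ * ih₁ - ih₀ - cos_add_two_mul_add_cos_mul n u
      + cos_add_two_mul_add_cos_mul n θ

lemma integral_glauertKernel (hθ : sin θ ≠ 0) (n : ℕ) :
    ∫ u in (0 : ℝ)..π, glauertKernel θ n u = π * sin (n * θ) / sin θ := by
  induction n using Nat.twoStepInduction with
  | zero => simp [glauertKernel]
  | one => simp [glauertKernel, hθ]
  | more n ih₀ ih₁ =>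
    have hint {f : ℝ → ℝ} (hf : Continuous f) : IntervalIntegrable f volume 0 π :=
      hf.intervalIntegrable _ _
    simp only [glauertKernel]
    rw [intervalIntegral.integral_sub (hint (by fun_prop)) (hint (by fun_prop)),
      intervalIntegral.integral_add (hint (by fun_prop)) (hint (by fun_prop)),
      intervalIntegral.integral_const_mul, intervalIntegral.integral_const_mul,
      integral_cos_nat_mul_zero_pi n.succ_ne_zero, ih₀, ih₁]
    push_cast
    linear_combination -(π / sin θ) * sin_add_two_mul_add_sin_mul n θ

end glauertKernel

noncomputable def puncturedIntegral (f : ℝ → ℝ) (a b θ ε : ℝ) : ℝ :=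
  (∫ u in a..(θ - ε), f u) + ∫ u in (θ + ε)..b, f u

namespace puncturedIntegral

variable {f g : ℝ → ℝ} {a b θ ε : ℝ}

lemma eventually_gap_subset (ha : a < θ) (hb : θ < b) :
    ∀ᶠ ε in 𝓝[>] (0 : ℝ), 0 < ε ∧ a ≤ θ - ε ∧ θ + ε ≤ b := by
  filter_upwards [self_mem_nhdsWithin,
    Ioo_mem_nhdsGT (show (0 : ℝ) < min (θ - a) (b - θ) by simp [ha, hb])] with ε h₀ hε
  simp only [lt_min_iff, mem_Ioo] at hε
  exact ⟨h₀, by linarith, by linarith⟩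

lemma uIcc_left_subset (hε : 0 < ε) (ha : a ≤ θ - ε) (hb : θ + ε ≤ b) :
    uIcc a (θ - ε) ⊆ Icc a b \ {θ} := by
  rw [uIcc_of_le ha]
  exact fun u hu => ⟨⟨hu.1, by linarith [hu.2]⟩, fun h : u = θ => by linarith [hu.2]⟩

lemma uIcc_right_subset (hε : 0 < ε) (ha : a ≤ θ - ε) (hb : θ + ε ≤ b) :
    uIcc (θ + ε) b ⊆ Icc a b \ {θ} := by
  rw [uIcc_of_le hb]
  exact fun u hu => ⟨⟨by linarith [hu.1], hu.2⟩, fun h : u = θ => by linarith [hu.1]⟩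

lemma congr (h : EqOn f g (Icc a b \ {θ})) (hε : 0 < ε) (ha : a ≤ θ - ε) (hb : θ + ε ≤ b) :
    puncturedIntegral f a b θ ε = puncturedIntegral g a b θ ε := by
  rw [puncturedIntegral, puncturedIntegral,
    intervalIntegral.integral_congr (h.mono (uIcc_left_subset hε ha hb)),
    intervalIntegral.integral_congr (h.mono (uIcc_right_subset hε ha hb))]

lemma add (hf : ContinuousOn f (Icc a b \ {θ})) (hg : ContinuousOn g (Icc a b \ {θ}))
    (hε : 0 < ε) (ha : a ≤ θ - ε) (hb : θ + ε ≤ b) :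
    puncturedIntegral (fun u => f u + g u) a b θ ε =
      puncturedIntegral f a b θ ε + puncturedIntegral g a b θ ε := by
  have hL := uIcc_left_subset hε ha hb
  have hR := uIcc_right_subset hε ha hb
  rw [puncturedIntegral, puncturedIntegral, puncturedIntegral,
    intervalIntegral.integral_add (hf.mono hL).intervalIntegrable (hg.mono hL).intervalIntegrable,
    intervalIntegral.integral_add (hf.mono hR).intervalIntegrable (hg.mono hR).intervalIntegrable]
  ring

lemma const_mul (c : ℝ) :
    puncturedIntegral (fun u => c * f u) a b θ ε = c * puncturedIntegral f a b θ ε := by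
  simp only [puncturedIntegral, intervalIntegral.integral_const_mul, mul_add]

lemma eq_sub_of_hasDerivAt {F : ℝ → ℝ} (hF : ∀ t ∈ Icc a b \ {θ}, HasDerivAt F (f t) t)
    (hf : ContinuousOn f (Icc a b \ {θ})) (hε : 0 < ε) (ha : a ≤ θ - ε) (hb : θ + ε ≤ b) :
    puncturedIntegral f a b θ ε = F (θ - ε) - F a + (F b - F (θ + ε)) := by
  have hL := uIcc_left_subset hε ha hb
  have hR := uIcc_right_subset hε ha hb
  rw [puncturedIntegral,
    intervalIntegral.integral_eq_sub_of_hasDerivAt (fun t ht => hF t (hL ht))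
      (hf.mono hL).intervalIntegrable,
    intervalIntegral.integral_eq_sub_of_hasDerivAt (fun t ht => hF t (hR ht))
      (hf.mono hR).intervalIntegrable]

lemma tendsto_of_continuous (hf : Continuous f) :
    Tendsto (puncturedIntegral f a b θ) (𝓝 0) (𝓝 (∫ u in a..b, f u)) := by
  have hint : ∀ x y, IntervalIntegrable f volume x y := fun x y => hf.intervalIntegrable x y
  have hcont : Continuous (puncturedIntegral f a b θ) := by
    have h₁ := intervalIntegral.continuous_primitive hint a
    have h₂ := intervalIntegral.continuous_primitive hint b
    have h : puncturedIntegral f a b θ =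
        fun ε => (∫ u in a..(θ - ε), f u) - ∫ u in b..(θ + ε), f u := by
      ext ε
      rw [puncturedIntegral, intervalIntegral.integral_symm (θ + ε) b, sub_neg_eq_add]
    rw [h]
    fun_prop
  simpa [puncturedIntegral, intervalIntegral.integral_add_adjacent_intervals (hint a θ) (hint θ b)]
    using hcont.tendsto 0

end puncturedIntegral

/-- Since `Real.log x = log |x|`, this is a primitive on both sides of the singularity. -/
noncomputable def cosSubCosPrimitive (θ u : ℝ) : ℝ :=
  (log (sin ((θ + u) / 2)) - log (sin ((θ - u) / 2))) / sin θ

lemma hasDerivAt_cosSubCosPrimitive {θ t : ℝ} (hθ : sin θ ≠ 0) (hA : sin ((θ + t) / 2) ≠ 0)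
    (hB : sin ((θ - t) / 2) ≠ 0) :
    HasDerivAt (cosSubCosPrimitive θ) (cos t - cos θ)⁻¹ t := by
  have hA' := (((hasDerivAt_id' t).const_add θ).div_const 2).sin.log hA
  have hB' := (((hasDerivAt_id' t).const_sub θ).div_const 2).sin.log hB
  refine ((hA'.sub hB').div_const (sin θ)).congr_deriv ?_
  rw [cos_sub_cos]
  obtain ⟨A, B, rfl, rfl⟩ : ∃ A B, θ = A + B ∧ t = A - B :=
    ⟨(θ + t) / 2, (θ - t) / 2, by ring, by ring⟩
  simp only [show (A + B + (A - B)) / 2 = A by ring, show (A + B - (A - B)) / 2 = B by ring,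
    show (A - B + (A + B)) / 2 = A by ring, show (A - B - (A + B)) / 2 = -B by ring,
    sin_neg] at hA hB ⊢
  rw [sin_add] at hθ ⊢
  field_simp
  ring

lemma cosSubCosPrimitive_zero (θ : ℝ) : cosSubCosPrimitive θ 0 = 0 := by
  simp [cosSubCosPrimitive]

lemma cosSubCosPrimitive_pi (θ : ℝ) : cosSubCosPrimitive θ π = 0 := by
  rw [cosSubCosPrimitive, show (θ + π) / 2 = π - (π - θ) / 2 by ring,
    show (θ - π) / 2 = -((π - θ) / 2) by ring, sin_pi_sub, sin_neg, log_neg_eq_log, sub_self,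
    zero_div]

lemma cosSubCosPrimitive_sub_sub_add (θ ε : ℝ) :
    cosSubCosPrimitive θ (θ - ε) - cosSubCosPrimitive θ (θ + ε) =
      (log (sin (θ - ε / 2)) - log (sin (θ + ε / 2))) / sin θ := by
  rw [cosSubCosPrimitive, cosSubCosPrimitive, show (θ + (θ - ε)) / 2 = θ - ε / 2 by ring,
    show (θ - (θ - ε)) / 2 = ε / 2 by ring, show (θ + (θ + ε)) / 2 = θ + ε / 2 by ring,
    show (θ - (θ + ε)) / 2 = -(ε / 2) by ring, sin_neg, log_neg_eq_log]
  ring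

lemma cos_sub_cos_ne_zero {θ t : ℝ} (hθ : θ ∈ Icc 0 π) (ht : t ∈ Icc 0 π \ {θ}) :
    cos t - cos θ ≠ 0 :=
  fun h => ht.2 (injOn_cos ht.1 hθ (sub_eq_zero.1 h))

lemma continuousOn_inv_cos_sub_cos {θ : ℝ} (hθ : θ ∈ Icc 0 π) :
    ContinuousOn (fun u => (cos u - cos θ)⁻¹) (Icc 0 π \ {θ}) :=
  (continuous_cos.continuousOn.sub continuousOn_const).inv₀ fun _ ht => cos_sub_cos_ne_zero hθ ht

lemma tendsto_puncturedIntegral_inv_cos_sub_cos {θ : ℝ} (hθ : θ ∈ Ioo 0 π) :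
    Tendsto (puncturedIntegral (fun u => (cos u - cos θ)⁻¹) 0 π θ) (𝓝[>] 0) (𝓝 0) := by
  obtain ⟨hθ₀, hθπ⟩ := hθ
  have hsin : sin θ ≠ 0 := (sin_pos_of_pos_of_lt_pi hθ₀ hθπ).ne'
  have hderiv : ∀ t ∈ Icc 0 π \ {θ}, HasDerivAt (cosSubCosPrimitive θ) (cos t - cos θ)⁻¹ t := by
    rintro t ⟨⟨ht₀, htπ⟩, htθ⟩
    refine hasDerivAt_cosSubCosPrimitive hsin
      (sin_pos_of_pos_of_lt_pi (by linarith) (by linarith)).ne' ?_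
    rw [Ne, sin_eq_zero_iff_of_lt_of_lt (by linarith) (by linarith)]
    exact fun h => htθ (show t = θ by linarith)
  have hjump : ContinuousAt
      (fun ε => (log (sin (θ - ε / 2)) - log (sin (θ + ε / 2))) / sin θ) 0 := by
    fun_prop (disch := simp [hsin])
  refine (tendsto_nhdsWithin_of_tendsto_nhds (by simpa using hjump.tendsto)).congr' ?_
  filter_upwards [puncturedIntegral.eventually_gap_subset hθ₀ hθπ] with ε ⟨hε, ha, hb⟩
  rw [puncturedIntegral.eq_sub_of_hasDerivAt hderiv
      (continuousOn_inv_cos_sub_cos ⟨hθ₀.le, hθπ.le⟩) hε ha hb,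
    cosSubCosPrimitive_zero, cosSubCosPrimitive_pi, ← cosSubCosPrimitive_sub_sub_add]
  ring

theorem pv_cos_integral (n : ℕ) (θ : ℝ) (hθ : θ ∈ Set.Ioo 0 π) :
    Tendsto (fun ε : ℝ =>
        (∫ u in (0:ℝ)..(θ - ε), Real.cos (n * u) / (Real.cos u - Real.cos θ)) +
        ∫ u in (θ + ε)..π, Real.cos (n * u) / (Real.cos u - Real.cos θ))
      (nhdsWithin 0 (Set.Ioi 0))
      (nhds (π * Real.sin (n * θ) / Real.sin θ)) := by
  suffices Tendsto (puncturedIntegral (fun u => cos (n * u) / (cos u - cos θ)) 0 π θ)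
      (𝓝[>] 0) (𝓝 (π * sin (n * θ) / sin θ)) from this
  have hθ' : θ ∈ Icc 0 π := Ioo_subset_Icc_self hθ
  have hsplit : EqOn (fun u => cos (n * u) / (cos u - cos θ))
      (fun u => glauertKernel θ n u + cos (n * θ) * (cos u - cos θ)⁻¹) (Icc 0 π \ {θ}) := by
    intro u hu
    have hd := cos_sub_cos_ne_zero hθ' hu
    have hmul := glauertKernel_mul_cos_sub_cos θ n u
    field_simp
    linarith
  have hkernel : Tendsto (puncturedIntegral (glauertKernel θ n) 0 π θ) (𝓝[>] 0)
      (𝓝 (π * sin (n * θ) / sin θ)) := by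
    rw [← integral_glauertKernel θ (sin_pos_of_pos_of_lt_pi hθ.1 hθ.2).ne' n]
    exact (puncturedIntegral.tendsto_of_continuous (continuous_glauertKernel θ n)).mono_left
      nhdsWithin_le_nhds
  have hlim := hkernel.add ((tendsto_puncturedIntegral_inv_cos_sub_cos hθ).const_mul (cos (n * θ)))
  rw [mul_zero, add_zero] at hlim
  refine hlim.congr' ?_
  filter_upwards [puncturedIntegral.eventually_gap_subset hθ.1 hθ.2] with ε ⟨hε, ha, hb⟩
  rw [puncturedIntegral.congr hsplit hε ha hb,
    puncturedIntegral.add (g := fun u => cos (n * θ) * (cos u - cos θ)⁻¹)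
      (continuous_glauertKernel θ n).continuousOn
      (continuousOn_const.mul (continuousOn_inv_cos_sub_cos hθ')) hε ha hb,
    puncturedIntegral.const_mul]
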